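/- For each of b ∈ {2, 3, 5, 7, 9}, there are infinitely many triangular numbers palindromic in base b. -/

import Mathlib

/-!
Since `8 * tri n + 1 = (2 n + 1)^2`, a number `m` is triangular as soon as `8 m + 1` is an odd
square. For odd `b` with `8 d + 1 = b ^ (s + 1)` a square (`d = 1, 3, 6, 1` and `s = 1, 1, 1, 0`
for `b = 3, 5, 7, 9`), the base-`b` palindrome `d 0^s d 0^s … d` with `k + 1` copies of `d` has
`8 m + 1 = b ^ ((s + 1) (k + 1))`, again an odd square. In base `2`, the palindrome
`1 0^k 1 1 0^k 1` is `(2^(k+1) + 1) (2^(k+2) + 1) = tri (2^(k+2) + 1)`.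
-/

/-- The n-th triangular number. -/
def tri (n : ℕ) : ℕ := n * (n + 1) / 2

def triPalindromes (b : ℕ) : Set ℕ :=
  {m | (∃ n, m = tri n) ∧ (Nat.digits b m).reverse = Nat.digits b m}

lemma eight_mul_tri_add_one (n : ℕ) : 8 * tri n + 1 = (2 * n + 1) ^ 2 := by
  obtain ⟨q, hq⟩ := Nat.even_mul_succ_self n
  have htri : tri n = q := by unfold tri; omega
  rw [htri]
  nlinarith

lemma tri_eq_of_eight_mul_add_one_eq {m n : ℕ} (h : 8 * m + 1 = (2 * n + 1) ^ 2) : tri n = m := by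
  have := eight_mul_tri_add_one n
  omega

lemma Nat.digits_ofDigits_of_reverse_eq {b : ℕ} (hb : 1 < b) {L : List ℕ}
    (hlt : ∀ l ∈ L, l < b) (hpal : L.reverse = L) (hhead : ∀ h : L ≠ [], L.head h ≠ 0) :
    Nat.digits b (Nat.ofDigits b L) = L := by
  refine Nat.digits_ofDigits b hb L hlt fun h => ?_
  simpa [List.getLast_eq_head_reverse, hpal] using hhead h

lemma triPalindromes_infinite {b : ℕ} (hb : 1 < b) (L : ℕ → List ℕ)
    (hinj : Function.Injective L) (hlt : ∀ k, ∀ l ∈ L k, l < b)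
    (hpal : ∀ k, (L k).reverse = L k) (hhead : ∀ k, ∀ h : L k ≠ [], (L k).head h ≠ 0)
    (hsq : ∀ k, ∃ n, 8 * Nat.ofDigits b (L k) + 1 = (2 * n + 1) ^ 2) :
    (triPalindromes b).Infinite := by
  have hdigits k := Nat.digits_ofDigits_of_reverse_eq hb (hlt k) (hpal k) (hhead k)
  refine Set.infinite_of_injective_forall_mem (f := fun k => Nat.ofDigits b (L k)) ?_ fun k => ?_
  · intro k k' h
    apply hinj
    simpa only [hdigits] using congrArg (Nat.digits b) h
  · obtain ⟨n, hn⟩ := hsq k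
    exact ⟨⟨n, (tri_eq_of_eight_mul_add_one_eq hn).symm⟩, by simp only [hdigits, hpal]⟩

def spacedDigits (d s : ℕ) : ℕ → List ℕ
  | 0 => [d]
  | k + 1 => d :: (List.replicate s 0 ++ spacedDigits d s k)

namespace spacedDigits

variable (d s : ℕ)

lemma length (k : ℕ) : (spacedDigits d s k).length = (s + 1) * k + 1 := by
  induction k with
  | zero => rfl
  | succ k ih =>
    simp only [spacedDigits, List.length_cons, List.length_append, List.length_replicate, ih]
    ring

lemma injective : Function.Injective (spacedDigits d s) :=
  .of_comp (f := List.length) fun k k' h => by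
    simp only [Function.comp_apply, length] at h
    exact Nat.eq_of_mul_eq_mul_left (by omega : 0 < s + 1) (by omega)

lemma append_eq_cons (k : ℕ) :
    spacedDigits d s k ++ (List.replicate s 0 ++ [d]) =
      d :: (List.replicate s 0 ++ spacedDigits d s k) := by
  induction k with
  | zero => rfl
  | succ k ih => simp [spacedDigits, ih]

lemma reverse_eq (k : ℕ) : (spacedDigits d s k).reverse = spacedDigits d s k := by
  induction k with
  | zero => rfl
  | succ k ih => simp [spacedDigits, ih, append_eq_cons]

lemma head_eq (k : ℕ) (h : spacedDigits d s k ≠ []) : (spacedDigits d s k).head h = d := by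
  cases k <;> rfl

lemma lt_base {b : ℕ} (hd : d < b) (k : ℕ) : ∀ l ∈ spacedDigits d s k, l < b := by
  induction k with
  | zero => simpa [spacedDigits]
  | succ k ih =>
    simp only [spacedDigits, List.mem_cons, List.mem_append, List.mem_replicate]
    rintro l (rfl | ⟨-, rfl⟩ | hl) <;> [exact hd; omega; exact ih l hl]

lemma ofDigits_succ (b k : ℕ) :
    Nat.ofDigits b (spacedDigits d s (k + 1)) =
      d + b ^ (s + 1) * Nat.ofDigits b (spacedDigits d s k) := by
  rw [spacedDigits, Nat.ofDigits_cons, Nat.ofDigits_append, Nat.ofDigits_replicate_zero,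
    List.length_replicate]
  ring

lemma eight_mul_ofDigits_add_one {b : ℕ} (h : 8 * d + 1 = b ^ (s + 1)) (k : ℕ) :
    8 * Nat.ofDigits b (spacedDigits d s k) + 1 = (b ^ (s + 1)) ^ (k + 1) := by
  induction k with
  | zero => simpa [spacedDigits]
  | succ k ih => rw [ofDigits_succ, pow_succ' (b ^ (s + 1)) (k + 1), ← ih, ← h]; ring

end spacedDigits

lemma triPalindromes_infinite_of_square {b d s c : ℕ} (hd : 0 < d) (hdb : d < b)
    (hdc : 8 * d + 1 = c ^ 2) (hbc : b ^ (s + 1) = c ^ 2) : (triPalindromes b).Infinite := by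
  refine triPalindromes_infinite (by omega) (spacedDigits d s) (spacedDigits.injective d s)
    (spacedDigits.lt_base d s hdb) (spacedDigits.reverse_eq d s)
    (fun k h => (spacedDigits.head_eq d s k h).trans_ne hd.ne') fun k => ?_
  have hc : Odd c := by
    have : Odd (c ^ 2) := hdc ▸ ⟨4 * d, by ring⟩
    exact (Nat.odd_pow_iff two_ne_zero).mp this
  obtain ⟨n, hn⟩ := hc.pow (n := k + 1)
  refine ⟨n, ?_⟩
  rw [spacedDigits.eight_mul_ofDigits_add_one d s (hdc.trans hbc.symm), hbc, ← hn, ← pow_mul,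
    ← pow_mul, mul_comm]

def binaryBlock (k : ℕ) : List ℕ := 1 :: (List.replicate k 0 ++ [1])

lemma binaryBlock_reverse (k : ℕ) : (binaryBlock k).reverse = binaryBlock k := by
  simp [binaryBlock]

lemma ofDigits_two_binaryBlock (k : ℕ) : Nat.ofDigits 2 (binaryBlock k) = 2 ^ (k + 1) + 1 := by
  rw [binaryBlock, Nat.ofDigits_cons, Nat.ofDigits_append, Nat.ofDigits_replicate_zero,
    List.length_replicate, Nat.ofDigits_singleton, pow_succ]
  ring

lemma triPalindromes_two_infinite : (triPalindromes 2).Infinite := by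
  refine triPalindromes_infinite one_lt_two (fun k => binaryBlock k ++ binaryBlock k) ?_ ?_ ?_
    (fun k _ => by simp [binaryBlock]) fun k => ⟨2 ^ (k + 2) + 1, ?_⟩
  · intro k k' h
    have hlen := congrArg List.length h
    simp only [List.length_append, binaryBlock, List.length_cons, List.length_replicate] at hlen
    omega
  · intro k l hl
    simp only [binaryBlock, List.mem_append, List.mem_cons, List.mem_replicate,
      List.not_mem_nil, or_false] at hl
    omega
  · intro k
    simp only [List.reverse_append, binaryBlock_reverse]
  · have hlen : (binaryBlock k).length = k + 2 := by simp [binaryBlock]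
    rw [Nat.ofDigits_append, hlen, ofDigits_two_binaryBlock, pow_succ 2 (k + 1)]
    ring

theorem triangular_palindromes_small_bases :
    ∀ b ∈ ({2, 3, 5, 7, 9} : Set ℕ),
      {m : ℕ | (∃ n, m = tri n) ∧ (Nat.digits b m).reverse = Nat.digits b m}.Infinite := by
  rintro b (rfl | rfl | rfl | rfl | rfl)
  · exact triPalindromes_two_infinite
  · exact triPalindromes_infinite_of_square (d := 1) (s := 1) (c := 3)
      (by norm_num) (by norm_num) rfl rfl
  · exact triPalindromes_infinite_of_square (d := 3) (s := 1) (c := 5)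
      (by norm_num) (by norm_num) rfl rfl
  · exact triPalindromes_infinite_of_square (d := 6) (s := 1) (c := 7)
      (by norm_num) (by norm_num) rfl rfl
  · exact triPalindromes_infinite_of_square (d := 1) (s := 0) (c := 3)
      (by norm_num) (by norm_num) rfl rfl
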